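/- arXiv:1605.03815 — 3 statements merged into one kernel-verified Lean document; each statement's English description precedes it below -/
import Mathlib

section
/- In the BSC model with offset φ ≤ x, the probability of the starvation event for file size N equals P_s^<(N,φ,x) = ∑_{k=x+φ−1}^{N−1} ((x+φ−1)/(2k−x−φ+1)) · C(2k−x−φ+1, k−x−φ+1) · p^{k−x−φ+1} · q^k. -/
/-!
Since `φ ≤ x`, the buffer after step `n` is `x + φ - 1 - (d_n - a_n)`, so starvation means that
the walk `d_n - a_n`, whose steps are i.i.d. `±1`, reaches `m = x + φ - 1`. Split according to the
number `k` of services at the first passage, which then happens at time `2k - m`. A path of that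
length is a first passage exactly when all its nonempty suffixes have positive sum, i.e. when it
is a ballot sequence with `k` services and `k - m` arrivals; by the ballot theorem there are
`m / (2k - m) * C(2k - m, k)` of them, and each has probability `q ^ k * p ^ (k - m)`.
-/

open MeasureTheory ProbabilityTheory Finset

/-- Number of frame arrivals among the first `n` steps: `a_n = #{i ≤ n : ξ_i = +1}`. -/
def arrivals {Ω : Type*} (ξ : ℕ → Ω → ℤ) (n : ℕ) (ω : Ω) : ℕ :=
  ((Finset.Icc 1 n).filter (fun i => ξ i ω = 1)).card

/-- Number of frames served among the first `n` steps: `d_n = #{i ≤ n : ξ_i = −1}`. -/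
def departures {Ω : Type*} (ξ : ℕ → Ω → ℤ) (n : ℕ) (ω : Ω) : ℕ :=
  ((Finset.Icc 1 n).filter (fun i => ξ i ω = -1)).card

/-- Number of playable frames in the BSC buffer after step `n`:
`B_n = x + a_n − d_n` if `x + a_n ≤ φ − 2`, and
`B_n = x + a_n + φ − 1 − d_n` if `x + a_n ≥ φ − 1`. -/
def buffer {Ω : Type*} (x φ : ℕ) (ξ : ℕ → Ω → ℤ) (n : ℕ) (ω : Ω) : ℤ :=
  if ((x : ℤ) + arrivals ξ n ω) ≤ (φ : ℤ) - 2 then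
    (x : ℤ) + arrivals ξ n ω - departures ξ n ω
  else
    (x : ℤ) + arrivals ξ n ω + (φ : ℤ) - 1 - departures ξ n ω

/-- The starvation event for file size `N`: starvation occurs at some `k`-th
departure with `k ≤ N − 1`. -/
def starvationEvent {Ω : Type*} (x φ N : ℕ) (ξ : ℕ → Ω → ℤ) : Set Ω :=
  {ω | ∃ k ≤ N - 1, ∃ n, ξ n ω = -1 ∧ departures ξ n ω = k ∧ buffer x φ ξ n ω = 0}

def signLists : ℕ → Finset (List ℤ)
  | 0 => {[]}
  | n + 1 => (signLists n).image (List.cons 1) ∪ (signLists n).image (List.cons (-1))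

lemma mem_signLists {n : ℕ} {l : List ℤ} :
    l ∈ signLists n ↔ l.length = n ∧ ∀ a ∈ l, a = 1 ∨ a = -1 := by
  induction n generalizing l with
  | zero => simp +contextual [signLists, List.length_eq_zero_iff]
  | succ n ih =>
    cases l with
    | nil => simp [signLists]
    | cons a l =>
      simp only [signLists, mem_union, mem_image, List.cons.injEq, ih, List.length_cons,
        List.mem_cons, forall_eq_or_imp]
      grind

lemma card_filter_signLists_succ (n : ℕ) (P : List ℤ → Prop) [DecidablePred P] :
    #{l ∈ signLists (n + 1) | P l} =
      #{l ∈ signLists n | P (1 :: l)} + #{l ∈ signLists n | P (-1 :: l)} := by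
  rw [signLists, filter_union, filter_image, filter_image,
    card_union_of_disjoint, card_image_of_injective _ List.cons_injective,
    card_image_of_injective _ List.cons_injective]
  simp only [disjoint_left, mem_image]
  rintro _ ⟨_, _, rfl⟩ ⟨_, _, h⟩
  simp at h

lemma count_add_count_of_mem_signLists {n : ℕ} {l : List ℤ} (hl : l ∈ signLists n) :
    l.count 1 + l.count (-1) = n := by
  induction n generalizing l with
  | zero => simp_all [signLists]
  | succ n ih =>
    simp only [signLists, mem_union, mem_image] at hl
    rcases hl with ⟨l, hl, rfl⟩ | ⟨l, hl, rfl⟩ <;> simp [← ih hl] <;> omega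

lemma sum_eq_count_sub_count_of_mem_signLists {n : ℕ} {l : List ℤ} (hl : l ∈ signLists n) :
    l.sum = l.count 1 - l.count (-1) := by
  induction n generalizing l with
  | zero => simp_all [signLists]
  | succ n ih =>
    simp only [signLists, mem_union, mem_image] at hl
    rcases hl with ⟨l, hl, rfl⟩ | ⟨l, hl, rfl⟩ <;> simp [ih hl] <;> ring

lemma sum_eq_of_mem_signLists {n : ℕ} {l : List ℤ} (hl : l ∈ signLists n) :
    l.sum = 2 * l.count 1 - n := by
  rw [sum_eq_count_sub_count_of_mem_signLists hl, ← count_add_count_of_mem_signLists hl]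
  push_cast
  ring

lemma prod_getD_of_mem_signLists {M : Type*} [CommMonoid M] (f : ℤ → M) {n : ℕ} {l : List ℤ}
    (hl : l ∈ signLists n) :
    ∏ i ∈ range n, f (l.getD i 0) = f 1 ^ l.count 1 * f (-1) ^ l.count (-1) := by
  induction n generalizing l with
  | zero => simp_all [signLists]
  | succ n ih =>
    simp only [signLists, mem_union, mem_image] at hl
    rcases hl with ⟨l, hl, rfl⟩ | ⟨l, hl, rfl⟩ <;>
      rw [prod_range_succ'] <;> simp only [List.getD_cons_succ, List.getD_cons_zero, ih hl] <;>
      simp [pow_succ] <;> ac_rfl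

def IsBallotPath (l : List ℤ) : Prop := ∀ j < l.length, 0 < (l.drop j).sum

instance : DecidablePred IsBallotPath := fun _ => by unfold IsBallotPath; infer_instance

lemma isBallotPath_cons {a : ℤ} {l : List ℤ} :
    IsBallotPath (a :: l) ↔ 0 < a + l.sum ∧ IsBallotPath l := by
  rw [IsBallotPath, List.length_cons, Nat.forall_lt_succ_left]
  simp [IsBallotPath]

def ballotPaths (a b : ℕ) : Finset (List ℤ) :=
  {l ∈ signLists (a + b) | l.count 1 = a ∧ IsBallotPath l}

lemma mem_ballotPaths {a b : ℕ} {l : List ℤ} :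
    l ∈ ballotPaths a b ↔ l ∈ signLists (a + b) ∧ l.count 1 = a ∧ IsBallotPath l :=
  mem_filter

lemma card_ballotPaths_succ_zero (a : ℕ) : #(ballotPaths (a + 1) 0) = #(ballotPaths a 0) := by
  rw [ballotPaths, Nat.add_zero, card_filter_signLists_succ]
  have hno : #{l ∈ signLists a | (-1 :: l).count 1 = a + 1 ∧ IsBallotPath (-1 :: l)} = 0 := by
    refine card_eq_zero.2 (filter_eq_empty_iff.2 fun l hl ⟨hc, _⟩ => ?_)
    have := count_add_count_of_mem_signLists hl
    simp at hc
    omega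
  rw [hno, add_zero, ballotPaths, Nat.add_zero]
  congr 1
  refine filter_congr fun l hl => ?_
  rw [List.count_cons_self, isBallotPath_cons, sum_eq_of_mem_signLists hl]
  constructor
  · rintro ⟨hc, -, hb⟩; exact ⟨by omega, hb⟩
  · rintro ⟨hc, hb⟩; exact ⟨by omega, by omega, hb⟩

lemma card_ballotPaths_succ_succ {a b : ℕ} (hba : b < a) :
    #(ballotPaths (a + 1) (b + 1)) = #(ballotPaths a (b + 1)) + #(ballotPaths (a + 1) b) := by
  rw [ballotPaths, show a + 1 + (b + 1) = a + b + 1 + 1 by ring, card_filter_signLists_succ,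
    ballotPaths, ballotPaths, show a + 1 + b = a + b + 1 by ring]
  congr 2 <;> refine filter_congr fun l hl => ?_ <;>
    rw [isBallotPath_cons, sum_eq_of_mem_signLists hl]
  · rw [List.count_cons_self]
    constructor
    · rintro ⟨hc, -, hb⟩; exact ⟨by omega, hb⟩
    · rintro ⟨hc, hb⟩; exact ⟨by omega, by omega, hb⟩
  · rw [List.count_cons_of_ne (by norm_num)]
    constructor
    · rintro ⟨hc, -, hb⟩; exact ⟨hc, hb⟩
    · rintro ⟨hc, hb⟩; exact ⟨hc, by omega, hb⟩

lemma ballotPaths_self_eq_empty (a : ℕ) : ballotPaths (a + 1) (a + 1) = ∅ := by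
  refine filter_eq_empty_iff.2 fun l hl ⟨hc, hb⟩ => ?_
  have hlen := (mem_signLists.1 hl).1
  have := hb 0 (by omega)
  rw [List.drop_zero, sum_eq_of_mem_signLists hl, hc] at this
  push_cast at this
  omega

lemma card_ballotPaths_zero (a : ℕ) : #(ballotPaths a 0) = 1 := by
  induction a with
  | zero => decide
  | succ a ih => rw [card_ballotPaths_succ_zero, ih]

-- Both sides satisfy Pascal's recursion away from the diagonal `b = a + 1`, where both vanish.
theorem card_ballotPaths_succ_eq_choose_sub_choose : ∀ a b : ℕ, b ≤ a + 1 →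
    (#(ballotPaths (a + 1) b) : ℤ) = (a + b).choose a - (a + b).choose (a + 1)
  | a, 0, _ => by simp [card_ballotPaths_zero]
  | a, b + 1, hb => by
    rcases (Nat.lt_or_ge b a).symm with hab | hab
    · obtain rfl : a = b := by omega
      rw [ballotPaths_self_eq_empty, card_empty, show a + (a + 1) = 2 * a + 1 by ring,
        Nat.choose_symm_half]
      simp
    obtain ⟨a, rfl⟩ : ∃ a', a = a' + 1 := ⟨a - 1, by omega⟩
    have h₁ := Nat.choose_succ_succ' (a + b + 1) a
    have h₂ := Nat.choose_succ_succ' (a + b + 1) (a + 1)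
    rw [card_ballotPaths_succ_succ hab, Nat.cast_add,
      card_ballotPaths_succ_eq_choose_sub_choose a (b + 1) (by omega),
      card_ballotPaths_succ_eq_choose_sub_choose (a + 1) b (by omega),
      show a + 1 + (b + 1) = a + b + 1 + 1 by ring,
      show a + (b + 1) = a + b + 1 by ring, show a + 1 + b = a + b + 1 by ring, h₁, h₂]
    push_cast
    ring
termination_by a b => a + b

theorem card_ballotPaths {a b : ℕ} (hba : b ≤ a) (ha : 0 < a) :
    (#(ballotPaths a b) : ℝ) = (a - b) / (a + b) * (a + b).choose a := by
  obtain ⟨a, rfl⟩ : ∃ a', a = a' + 1 := ⟨a - 1, by omega⟩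
  have hcard : (#(ballotPaths (a + 1) b) : ℝ) = (a + b).choose a - (a + b).choose (a + 1) := by
    exact_mod_cast card_ballotPaths_succ_eq_choose_sub_choose a b (by omega)
  have h₁ := Nat.add_one_mul_choose_eq (a + b) a
  have h₂ := Nat.choose_mul_succ_eq (a + b) (a + 1)
  rw [show a + b + 1 - (a + 1) = b by omega] at h₂
  rw [show a + 1 + b = a + b + 1 by ring, hcard, div_mul_eq_mul_div, eq_div_iff (by positivity)]
  have h₁' : ((a + b + 1 : ℕ) : ℝ) * (a + b).choose a =
      (a + b + 1).choose (a + 1) * (a + 1 : ℕ) := by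
    exact_mod_cast h₁
  have h₂' : ((a + b).choose (a + 1) : ℝ) * (a + b + 1 : ℕ) = (a + b + 1).choose (a + 1) * b := by
    exact_mod_cast h₂
  push_cast at h₁' h₂' ⊢
  linear_combination h₁' - h₂'

namespace BSC

variable {Ω : Type*} {ξ : ℕ → Ω → ℤ}

-- Steps are negated so that services count `+1`, matching the sign convention of `ballotPaths`.
variable (ξ) in
def path (n : ℕ) (ω : Ω) : List ℤ := (List.range n).map fun i => -ξ (i + 1) ω

variable (ξ) in
def walk (n : ℕ) (ω : Ω) : ℤ := (path ξ n ω).sum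

lemma path_succ (n : ℕ) (ω : Ω) : path ξ (n + 1) ω = path ξ n ω ++ [-ξ (n + 1) ω] := by
  simp [path, List.range_succ]

@[simp]
lemma length_path (n : ℕ) (ω : Ω) : (path ξ n ω).length = n := by
  simp [path]

lemma take_path {j n : ℕ} (h : j ≤ n) (ω : Ω) : (path ξ n ω).take j = path ξ j ω := by
  simp [path, ← List.map_take, List.take_range, Nat.min_eq_left h]

lemma path_mem_signLists (hval : ∀ i ω, ξ i ω = 1 ∨ ξ i ω = -1) (n : ℕ) (ω : Ω) :
    path ξ n ω ∈ signLists n := by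
  refine mem_signLists.2 ⟨by simp [path], ?_⟩
  simp only [path, List.mem_map, List.mem_range]
  rintro _ ⟨i, -, rfl⟩
  rcases hval (i + 1) ω with h | h <;> simp [h]

lemma count_path (v : ℤ) (n : ℕ) (ω : Ω) :
    (path ξ n ω).count (-v) = #{i ∈ Icc 1 n | ξ i ω = v} := by
  induction n with
  | zero => simp [path]
  | succ n ih =>
    rw [path_succ, List.count_append, ih, ← insert_Icc_right_eq_Icc_add_one (by omega),
      filter_insert]
    by_cases h : ξ (n + 1) ω = v <;> simp [h]

lemma walk_succ (n : ℕ) (ω : Ω) : walk ξ (n + 1) ω = walk ξ n ω - ξ (n + 1) ω := by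
  simp [walk, path_succ, sub_eq_add_neg]

@[simp]
lemma walk_zero (ω : Ω) : walk ξ 0 ω = 0 := by
  simp [walk, path]

lemma sum_drop_path {j n : ℕ} (h : j ≤ n) (ω : Ω) :
    ((path ξ n ω).drop j).sum = walk ξ n ω - walk ξ j ω := by
  rw [walk, walk, ← take_path h, ← List.take_append_drop j (path ξ n ω), List.sum_append,
    List.take_append_drop]
  ring

lemma departures_eq_count (n : ℕ) (ω : Ω) : departures ξ n ω = (path ξ n ω).count 1 := by
  simpa [departures] using (count_path (-1) n ω).symm

lemma arrivals_eq_count (n : ℕ) (ω : Ω) : arrivals ξ n ω = (path ξ n ω).count (-1) :=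
  (count_path 1 n ω).symm

lemma departures_mono {m n : ℕ} (h : m ≤ n) (ω : Ω) : departures ξ m ω ≤ departures ξ n ω :=
  card_le_card (filter_subset_filter _ (Icc_subset_Icc_right h))

lemma departures_add_arrivals (hval : ∀ i ω, ξ i ω = 1 ∨ ξ i ω = -1) (n : ℕ) (ω : Ω) :
    departures ξ n ω + arrivals ξ n ω = n := by
  rw [departures_eq_count, arrivals_eq_count,
    count_add_count_of_mem_signLists (path_mem_signLists hval n ω)]

lemma walk_eq_departures_sub_arrivals (hval : ∀ i ω, ξ i ω = 1 ∨ ξ i ω = -1) (n : ℕ) (ω : Ω) :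
    walk ξ n ω = departures ξ n ω - arrivals ξ n ω := by
  rw [walk, departures_eq_count, arrivals_eq_count,
    sum_eq_count_sub_count_of_mem_signLists (path_mem_signLists hval n ω)]

lemma isBallotPath_path (n : ℕ) (ω : Ω) :
    IsBallotPath (path ξ n ω) ↔ ∀ j < n, walk ξ j ω < walk ξ n ω := by
  rw [IsBallotPath, length_path]
  refine forall₂_congr fun j hj => ?_
  rw [sum_drop_path hj.le, sub_pos]

lemma buffer_eq_zero_iff (hval : ∀ i ω, ξ i ω = 1 ∨ ξ i ω = -1) {x φ : ℕ} (hφx : φ ≤ x)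
    (n : ℕ) (ω : Ω) : buffer x φ ξ n ω = 0 ↔ walk ξ n ω = x + φ - 1 := by
  rw [buffer, if_neg (by omega), walk_eq_departures_sub_arrivals hval]
  omega

-- Indexed by the number `k` of services at the first passage to `m`, which has length `2k - m`.
variable (ξ) in
def firstHit (m k : ℕ) : Set Ω :=
  {ω | walk ξ (k + (k - m)) ω = m ∧ ∀ j < k + (k - m), walk ξ j ω < m}

lemma firstHit_eq_preimage (hval : ∀ i ω, ξ i ω = 1 ∨ ξ i ω = -1) {m k : ℕ} (hmk : m ≤ k) :
    firstHit ξ m k = path ξ (k + (k - m)) ⁻¹' ↑(ballotPaths k (k - m)) := by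
  ext ω
  have hmem := path_mem_signLists hval (k + (k - m)) ω
  have hwalk : walk ξ (k + (k - m)) ω = 2 * (path ξ (k + (k - m)) ω).count 1 - (k + (k - m) : ℕ) :=
    sum_eq_of_mem_signLists hmem
  simp only [firstHit, Set.mem_ofPred_eq, Set.mem_preimage, ballotPaths, coe_filter, hmem,
    isBallotPath_path, true_and]
  constructor
  · rintro ⟨hw, hlt⟩
    exact ⟨by omega, fun j hj => hw ▸ hlt j hj⟩
  · rintro ⟨hc, hlt⟩
    have hw : walk ξ (k + (k - m)) ω = m := by rw [hwalk, hc]; omega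
    exact ⟨hw, fun j hj => hw ▸ hlt j hj⟩

lemma pairwiseDisjoint_firstHit (m : ℕ) : (Set.Ici m).PairwiseDisjoint (firstHit ξ m) := by
  intro k hk k' hk' hne
  wlog hlt : k < k' generalizing k k'
  · exact (this hk' hk hne.symm (by omega)).symm
  refine Set.disjoint_left.2 fun ω ⟨hw, _⟩ ⟨_, hlt'⟩ => ?_
  simp only [Set.mem_Ici] at hk hk'
  exact (hlt' _ (by omega)).ne hw

lemma exists_firstHit_of_walk_eq (hval : ∀ i ω, ξ i ω = 1 ∨ ξ i ω = -1) {m n : ℕ} (hm : 1 ≤ m)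
    {ω : Ω} (hn : walk ξ n ω = m) :
    ∃ k, m ≤ k ∧ k ≤ departures ξ n ω ∧ ω ∈ firstHit ξ m k := by
  have hex : ∃ j, (m : ℤ) ≤ walk ξ j ω := ⟨n, hn.ge⟩
  have hbelow : ∀ j < Nat.find hex, walk ξ j ω < m := fun j hj => not_le.1 (Nat.find_min hex hj)
  obtain ⟨j, hj⟩ : ∃ j, Nat.find hex = j + 1 := Nat.exists_eq_succ_of_ne_zero fun h0 => by
    have := h0 ▸ Nat.find_spec hex
    simp only [walk_zero] at this
    omega
  -- the walk moves by ±1, so it cannot overshoot `m` the first time it reaches it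
  have hhit : walk ξ (j + 1) ω = m := by
    have hreach : (m : ℤ) ≤ walk ξ (j + 1) ω := hj ▸ Nat.find_spec hex
    have hprev := hbelow j (by omega)
    rw [walk_succ] at hreach ⊢
    rcases hval (j + 1) ω with h | h <;> rw [h] at hreach ⊢ <;> omega
  have hdn := departures_mono (ξ := ξ) (hj ▸ Nat.find_min' hex hn.ge) ω
  have hda := departures_add_arrivals hval (j + 1) ω
  have hw := walk_eq_departures_sub_arrivals hval (j + 1) ω
  refine ⟨departures ξ (j + 1) ω, by omega, hdn, ?_⟩
  rw [firstHit, Set.mem_ofPred_eq,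
    show departures ξ (j + 1) ω + (departures ξ (j + 1) ω - m) = j + 1 by omega]
  exact ⟨hhit, hj ▸ hbelow⟩

lemma starvationEvent_eq_biUnion_firstHit (hval : ∀ i ω, ξ i ω = 1 ∨ ξ i ω = -1) {x φ N : ℕ}
    (hφ : 1 ≤ φ) (hφx : φ ≤ x) :
    starvationEvent x φ N ξ = ⋃ k ∈ Icc (x + φ - 1) (N - 1), firstHit ξ (x + φ - 1) k := by
  ext ω
  simp only [starvationEvent, Set.mem_ofPred_eq, Set.mem_iUnion, mem_Icc, exists_prop]
  constructor
  · rintro ⟨-, hkN, n, -, rfl, hb⟩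
    have hw := (buffer_eq_zero_iff hval hφx n ω).1 hb
    obtain ⟨k, hmk, hkn, hk⟩ :=
      exists_firstHit_of_walk_eq hval (m := x + φ - 1) (n := n) (ω := ω) (by omega) (by omega)
    exact ⟨k, ⟨hmk, by omega⟩, hk⟩
  · rintro ⟨k, ⟨hmk, hkN⟩, hw, hbelow⟩
    set n := k + (k - (x + φ - 1))
    obtain ⟨j, hj⟩ : ∃ j, n = j + 1 := ⟨n - 1, by omega⟩
    have hstep := walk_succ (ξ := ξ) j ω
    have hprev := hbelow j (by omega)
    have hda := departures_add_arrivals hval n ω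
    have hdiff := walk_eq_departures_sub_arrivals hval n ω
    refine ⟨k, hkN, n, ?_, by omega, (buffer_eq_zero_iff hval hφx n ω).2 (by omega)⟩
    rw [hj] at hw ⊢
    rcases hval (j + 1) ω with h | h <;> omega

lemma setOf_path_eq {n : ℕ} {l : List ℤ} (hl : l.length = n) :
    {ω | path ξ n ω = l} = ⋂ i ∈ range n, ξ (i + 1) ⁻¹' {-l.getD i 0} := by
  ext ω
  simp only [Set.mem_ofPred_eq, Set.mem_iInter, Set.mem_preimage, Set.mem_singleton_iff, path,
    List.ext_getElem_iff, List.length_map, List.length_range, hl, true_and, List.getElem_map,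
    List.getElem_range, mem_range]
  exact forall₂_congr fun i hi => by
    simp [hi, List.getElem?_eq_getElem (hl ▸ hi), neg_eq_iff_eq_neg]

section Probability

variable [MeasurableSpace Ω] {P : Measure Ω}

lemma measurableSet_preimage_path (hmeas : ∀ i, Measurable (ξ i)) {n : ℕ} {A : Finset (List ℤ)}
    (hA : ∀ l ∈ A, l.length = n) : MeasurableSet (path ξ n ⁻¹' ↑A) := by
  rw [← set_biUnion_preimage_singleton]
  refine A.measurableSet_biUnion fun l hl => ?_
  change MeasurableSet {ω | path ξ n ω = l}
  rw [setOf_path_eq (hA l hl)]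
  exact measurableSet_biInter _ fun i _ => hmeas (i + 1) (measurableSet_singleton _)

lemma measure_setOf_path_eq {p q : ℝ} (hindep : iIndepFun ξ P)
    (harr : ∀ i, P {ω | ξ i ω = 1} = ENNReal.ofReal p)
    (hdep : ∀ i, P {ω | ξ i ω = -1} = ENNReal.ofReal q) {n : ℕ} {l : List ℤ}
    (hl : l ∈ signLists n) :
    P {ω | path ξ n ω = l} = ENNReal.ofReal q ^ l.count 1 * ENNReal.ofReal p ^ l.count (-1) := by
  rw [setOf_path_eq (mem_signLists.1 hl).1,
    (hindep.precomp (add_left_injective 1)).measure_inter_preimage_eq_mul (range n)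
      (sets := fun i => {-l.getD i 0}) fun _ _ => measurableSet_singleton _]
  let w : ℤ → ENNReal := fun v => if v = 1 then ENNReal.ofReal q else ENNReal.ofReal p
  have hfactor : ∀ i ∈ range n, P (ξ (i + 1) ⁻¹' {-l.getD i 0}) = w (l.getD i 0) := by
    intro i hi
    have hmem : l.getD i 0 ∈ l := by
      rw [List.getD_eq_getElem _ _ (by rw [(mem_signLists.1 hl).1]; exact mem_range.1 hi)]
      exact List.getElem_mem _
    rcases (mem_signLists.1 hl).2 _ hmem with h | h <;> rw [h]
    · exact hdep (i + 1)
    · exact harr (i + 1)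
  rw [prod_congr rfl hfactor, prod_getD_of_mem_signLists w hl]
  simp [w]

lemma measure_preimage_path {p q : ℝ} (hmeas : ∀ i, Measurable (ξ i)) (hindep : iIndepFun ξ P)
    (harr : ∀ i, P {ω | ξ i ω = 1} = ENNReal.ofReal p)
    (hdep : ∀ i, P {ω | ξ i ω = -1} = ENNReal.ofReal q) {n a : ℕ} {A : Finset (List ℤ)}
    (hA : ∀ l ∈ A, l ∈ signLists n ∧ l.count 1 = a) :
    P (path ξ n ⁻¹' ↑A) = #A * (ENNReal.ofReal q ^ a * ENNReal.ofReal p ^ (n - a)) := by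
  have hlen : ∀ l ∈ A, l.length = n := fun l hl => (mem_signLists.1 (hA l hl).1).1
  rw [← sum_measure_preimage_singleton A fun l hl => by
    simpa using measurableSet_preimage_path hmeas (A := {l}) (by simpa using hlen l hl)]
  rw [sum_congr rfl fun l hl => ?_, sum_const, nsmul_eq_mul]
  obtain ⟨hmem, hcount⟩ := hA l hl
  have hsplit := count_add_count_of_mem_signLists hmem
  rw [show n - a = l.count (-1) by omega, ← hcount]
  exact measure_setOf_path_eq hindep harr hdep hmem

lemma measurableSet_firstHit (hval : ∀ i ω, ξ i ω = 1 ∨ ξ i ω = -1)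
    (hmeas : ∀ i, Measurable (ξ i)) {m k : ℕ} (hmk : m ≤ k) : MeasurableSet (firstHit ξ m k) := by
  rw [firstHit_eq_preimage hval hmk]
  exact measurableSet_preimage_path hmeas fun l hl => (mem_signLists.1 (mem_ballotPaths.1 hl).1).1

lemma measure_firstHit {p q : ℝ} (hval : ∀ i ω, ξ i ω = 1 ∨ ξ i ω = -1)
    (hmeas : ∀ i, Measurable (ξ i)) (hindep : iIndepFun ξ P)
    (harr : ∀ i, P {ω | ξ i ω = 1} = ENNReal.ofReal p)
    (hdep : ∀ i, P {ω | ξ i ω = -1} = ENNReal.ofReal q) {m k : ℕ} (hmk : m ≤ k) :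
    P (firstHit ξ m k) =
      #(ballotPaths k (k - m)) * (ENNReal.ofReal q ^ k * ENNReal.ofReal p ^ (k - m)) := by
  rw [firstHit_eq_preimage hval hmk, measure_preimage_path hmeas hindep harr hdep
    fun l hl => ⟨(mem_ballotPaths.1 hl).1, (mem_ballotPaths.1 hl).2.1⟩, Nat.add_sub_cancel_left]

lemma measure_firstHit_eq_ofReal {p q : ℝ} (hp : 0 ≤ p) (hq : 0 ≤ q)
    (hval : ∀ i ω, ξ i ω = 1 ∨ ξ i ω = -1) (hmeas : ∀ i, Measurable (ξ i))
    (hindep : iIndepFun ξ P) (harr : ∀ i, P {ω | ξ i ω = 1} = ENNReal.ofReal p)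
    (hdep : ∀ i, P {ω | ξ i ω = -1} = ENNReal.ofReal q) {m k : ℕ} (hm : 1 ≤ m) (hmk : m ≤ k) :
    P (firstHit ξ m k) = ENNReal.ofReal
      (m / (k + (k - m) : ℕ) * (k + (k - m)).choose (k - m) * p ^ (k - m) * q ^ k) := by
  have hcard : (#(ballotPaths k (k - m)) : ℝ) =
      m / (k + (k - m) : ℕ) * (k + (k - m)).choose (k - m) := by
    rw [card_ballotPaths (Nat.sub_le k m) (by omega), Nat.choose_symm_add]
    push_cast [Nat.cast_sub hmk]
    ring
  rw [measure_firstHit hval hmeas hindep harr hdep hmk, ← hcard, ENNReal.ofReal_mul (by positivity),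
    ENNReal.ofReal_mul (by positivity), ENNReal.ofReal_natCast, ENNReal.ofReal_pow hp,
    ENNReal.ofReal_pow hq]
  ring

end Probability

end BSC

theorem BSC_starvation_probability_small_offset_general
    {Ω : Type*} [MeasurableSpace Ω] (P : Measure Ω)
    (p q : ℝ) (hp0 : 0 < p) (hp1 : p < 1) (hq : q = 1 - p)
    (ξ : ℕ → Ω → ℤ)
    (hmeas : ∀ i, Measurable (ξ i))
    (hindep : iIndepFun ξ P)
    (hval : ∀ i ω, ξ i ω = 1 ∨ ξ i ω = -1)
    (harr : ∀ i, P {ω | ξ i ω = 1} = ENNReal.ofReal p)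
    (hdep : ∀ i, P {ω | ξ i ω = -1} = ENNReal.ofReal q)
    (N x φ : ℕ) (hφ : 1 ≤ φ) (hφx : φ ≤ x) :
    P (starvationEvent x φ N ξ) =
      ENNReal.ofReal (∑ k ∈ Finset.Icc (x + φ - 1) (N - 1),
        (((x : ℝ) + φ - 1) / (2 * k - x - φ + 1)) *
          (Nat.choose (2 * k + 1 - x - φ) (k + 1 - x - φ)) *
          p ^ (k + 1 - x - φ) * q ^ k) := by
  have hq0 : 0 ≤ q := by linarith
  have hm : 1 ≤ x + φ - 1 := by omega
  have hterm : ∀ k ∈ Icc (x + φ - 1) (N - 1),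
      ((x : ℝ) + φ - 1) / (2 * k - x - φ + 1) * (2 * k + 1 - x - φ).choose (k + 1 - x - φ) *
        p ^ (k + 1 - x - φ) * q ^ k =
      (x + φ - 1 : ℕ) / (k + (k - (x + φ - 1)) : ℕ) * (k + (k - (x + φ - 1))).choose
        (k - (x + φ - 1)) * p ^ (k - (x + φ - 1)) * q ^ k := by
    intro k hk
    have hmk := (mem_Icc.1 hk).1
    rw [show 2 * k + 1 - x - φ = k + (k - (x + φ - 1)) by omega,
      show k + 1 - x - φ = k - (x + φ - 1) by omega]
    push_cast [Nat.cast_sub hmk, Nat.cast_sub (by omega : 1 ≤ x + φ)]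
    ring_nf
  have hdisj : (Icc (x + φ - 1) (N - 1) : Set ℕ).PairwiseDisjoint (BSC.firstHit ξ (x + φ - 1)) :=
    (BSC.pairwiseDisjoint_firstHit _).subset fun k hk => (mem_Icc.1 hk).1
  rw [sum_congr rfl hterm, ENNReal.ofReal_sum_of_nonneg fun k _ => by positivity,
    BSC.starvationEvent_eq_biUnion_firstHit hval hφ hφx, measure_biUnion_finset hdisj
    fun k hk => BSC.measurableSet_firstHit hval hmeas (mem_Icc.1 hk).1]
  exact sum_congr rfl fun k hk =>
    BSC.measure_firstHit_eq_ofReal hp0.le hq0 hval hmeas hindep harr hdep hm (mem_Icc.1 hk).1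

/-- In the BSC model with offset `φ ≤ x`, the probability of the starvation event
for file size `N` equals
`P_s^<(N,φ,x) = ∑_{k=x+φ−1}^{N−1} ((x+φ−1)/(2k−x−φ+1)) · C(2k−x−φ+1, k−x−φ+1) · p^{k−x−φ+1} · q^k`. -/
theorem BSC_starvation_probability_small_offset
    {Ω : Type*} [MeasurableSpace Ω] (P : Measure Ω) [IsProbabilityMeasure P]
    (p q : ℝ) (hp0 : 0 < p) (hp1 : p < 1) (hq : q = 1 - p)
    (ξ : ℕ → Ω → ℤ)
    (hmeas : ∀ i, Measurable (ξ i))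
    (hindep : iIndepFun ξ P)
    (hval : ∀ i ω, ξ i ω = 1 ∨ ξ i ω = -1)
    (harr : ∀ i, P {ω | ξ i ω = 1} = ENNReal.ofReal p)
    (hdep : ∀ i, P {ω | ξ i ω = -1} = ENNReal.ofReal q)
    (N x φ : ℕ) (hN : 1 ≤ N) (hx : 1 ≤ x) (hφ : 1 ≤ φ) (hφx : φ ≤ x) :
    P (starvationEvent x φ N ξ) =
      ENNReal.ofReal (∑ k ∈ Finset.Icc (x + φ - 1) (N - 1),
        (((x : ℝ) + φ - 1) / (2 * k - x - φ + 1)) *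
          (Nat.choose (2 * k + 1 - x - φ) (k + 1 - x - φ)) *
          p ^ (k + 1 - x - φ) * q ^ k) :=
  BSC_starvation_probability_small_offset_general P p q hp0 hp1 hq ξ hmeas hindep hval harr hdep N x
    φ hφ hφx
end

section
/- Fix integers x ≥ 1 and φ > x. The probability that the buffer walk started at x reaches 0 at some step n with #{i ≤ n : ξ_i = −1} ≤ φ − 2 (i.e., the buffer empties within the first φ − 2 departures) equals P_s1 = ∑_{k=x}^{φ−2} (x/(2k−x)) · C(2k−x, k−x) · p^{k−x} · q^k. -/
/-!
Since every step is `±1`, a walk from `x ≥ 1` that first empties at its `k`-th departure does so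
at step `2k - x`, after `k - x` arrivals. The event therefore splits into the disjoint events
"first empty at step `2k - x`", `x ≤ k ≤ φ - 2`. Each of these is the disjoint union, over the
first-passage paths `l` from `x`, of the cylinders `{(ξ₁, …, ξ_{2k-x}) = l}`, which by independence
all have probability `p ^ (k - x) * q ^ k`. By the ballot theorem there are
`x / (2k - x) * C(2k - x, k - x)` such paths; this follows by induction from the first-step
recursion `N(x + 1, n + 1) = N(x, n) + N(x + 2, n)` with Pascal's rule.
-/

open MeasureTheory ProbabilityTheory Finset

/-- The buffer walk started at `m`: `S n = m + ∑_{i=1}^n ξ_i`. -/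
def bufferWalk {Ω : Type*} (ξ : ℕ → Ω → ℤ) (m : ℕ) (n : ℕ) (ω : Ω) : ℤ :=
  (m : ℤ) + ∑ i ∈ Finset.Icc 1 n, ξ i ω

lemma prod_range_getD_eq_prod_map {α M : Type*} [CommMonoid M] (f : α → M) (d : α) (l : List α) :
    ∏ j ∈ range l.length, f (l.getD j d) = (l.map f).prod := by
  induction l with
  | nil => simp
  | cons a l ih =>
    rw [List.length_cons, prod_range_succ']
    simp only [List.getD_cons_succ, List.getD_cons_zero, ih, List.map_cons, List.prod_cons, mul_comm]

lemma prod_map_eq_pow_count_mul_pow_count {M : Type*} [CommMonoid M] (f : ℤ → M) {l : List ℤ}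
    (hl : ∀ s ∈ l, s = 1 ∨ s = -1) : (l.map f).prod = f 1 ^ l.count 1 * f (-1) ^ l.count (-1) := by
  induction l with
  | nil => simp
  | cons s l ih =>
    simp only [List.mem_cons, forall_eq_or_imp] at hl
    rcases hl with ⟨rfl | rfl, hl⟩ <;> simp [ih hl, pow_succ] <;> ac_rfl

def emptyingPaths : ℕ → ℕ → Finset (List ℤ)
  | 0, 0 => {[]}
  | _ + 1, 0 => ∅
  | 0, _ + 1 => ∅
  | x + 1, n + 1 =>
    (emptyingPaths x n).image (List.cons (-1)) ∪ (emptyingPaths (x + 2) n).image (List.cons 1)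

lemma mem_emptyingPaths_iff {x n : ℕ} {l : List ℤ} :
    l ∈ emptyingPaths x n ↔ l.length = n ∧ (∀ s ∈ l, s = 1 ∨ s = -1) ∧
      ∀ m ≤ n, ((x : ℤ) + (l.take m).sum = 0 ↔ m = n) := by
  induction n generalizing x l with
  | zero =>
    cases x <;> simp [emptyingPaths] <;> rintro rfl <;> simp
    omega
  | succ n ih =>
    rcases x with _ | y
    · simp only [emptyingPaths, Finset.notMem_empty, false_iff]
      rintro ⟨-, -, h⟩
      simpa using h 0 (Nat.zero_le _)
    rcases l with _ | ⟨s, t⟩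
    · simp [emptyingPaths]
    have hm : ∀ P : ℕ → Prop, (∀ m ≤ n + 1, P m) ↔ P 0 ∧ ∀ m ≤ n, P (m + 1) := by
      intro P
      refine ⟨fun h => ⟨h 0 (by omega), fun m hm => h _ (by omega)⟩, fun ⟨h0, h⟩ m hm => ?_⟩
      rcases m with _ | m
      exacts [h0, h m (by omega)]
    simp only [emptyingPaths, Finset.mem_union, Finset.mem_image, List.cons.injEq, ih,
      List.length_cons, List.mem_cons, forall_eq_or_imp, hm, List.take_zero, List.sum_nil,
      List.take_succ_cons, List.sum_cons]
    constructor
    · rintro (⟨t, ⟨hlen, hpm, hw⟩, rfl, rfl⟩ | ⟨t, ⟨hlen, hpm, hw⟩, rfl, rfl⟩) <;>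
        refine ⟨by omega, ⟨by simp, hpm⟩, by simp; omega, fun m hm => ?_⟩ <;>
        · have := hw m hm; push_cast at this ⊢; omega
    · rintro ⟨hlen, ⟨rfl | rfl, hpm⟩, -, hw⟩ <;> [right; left] <;>
        refine ⟨t, ⟨by omega, hpm, fun m hm => ?_⟩, rfl, rfl⟩ <;>
        · have := hw m hm; push_cast at this ⊢; omega

lemma emptyingPaths_eq_empty_of_lt {x n : ℕ} (h : n < x) : emptyingPaths x n = ∅ := by
  induction n generalizing x with
  | zero => obtain ⟨y, rfl⟩ := Nat.exists_eq_add_one_of_ne_zero h.ne'; rfl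
  | succ n ih =>
    obtain ⟨y, rfl⟩ := Nat.exists_eq_add_one_of_ne_zero (by omega : x ≠ 0)
    simp [emptyingPaths, ih (by omega : n < y), ih (by omega : n < y + 2)]

lemma card_emptyingPaths_succ_succ (x n : ℕ) :
    #(emptyingPaths (x + 1) (n + 1)) = #(emptyingPaths x n) + #(emptyingPaths (x + 2) n) := by
  rw [emptyingPaths, card_union_of_disjoint, card_image_of_injective _ (List.cons_injective),
    card_image_of_injective _ (List.cons_injective)]
  simp [disjoint_left]

lemma card_emptyingPaths_self (x : ℕ) : #(emptyingPaths x x) = 1 := by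
  induction x with
  | zero => rfl
  | succ x ih => rw [card_emptyingPaths_succ_succ, ih, emptyingPaths_eq_empty_of_lt (by omega)]; rfl

theorem card_emptyingPaths (x u : ℕ) :
    (2 * u + x) * #(emptyingPaths x (2 * u + x)) = x * (2 * u + x).choose u := by
  induction u generalizing x with
  | zero => simp [card_emptyingPaths_self]
  | succ u ihu =>
    induction x with
    | zero => rw [show 2 * (u + 1) + 0 = 2 * u + 1 + 1 by ring]; simp [emptyingPaths]
    | succ y ihy =>
      set N := 2 * u + y + 2
      have hA := ihy
      have hB := ihu (y + 2)
      have hPascal := Nat.choose_succ_succ' N u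
      have hAbsorb := Nat.choose_succ_right_eq N u
      rw [show 2 * (u + 1) + y = N by omega] at hA
      rw [show 2 * u + (y + 2) = N by omega] at hB
      rw [show N - u = u + y + 2 by omega] at hAbsorb
      rw [show 2 * (u + 1) + (y + 1) = N + 1 by omega, card_emptyingPaths_succ_succ]
      refine Nat.eq_of_mul_eq_mul_left (show 0 < N by omega) ?_
      have hN : (N : ℤ) = 2 * u + y + 2 := by push_cast [N]; ring
      zify at hA hB hPascal hAbsorb ⊢
      linear_combination (N + 1 : ℤ) * (hA + hB) - (N * (y + 1) : ℤ) * hPascal - 2 * hAbsorb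
        + ((N.choose u : ℤ) - N.choose (u + 1)) * hN

lemma card_emptyingPaths_eq_ballot {x k : ℕ} (hx : 1 ≤ x) (hk : x ≤ k) :
    (#(emptyingPaths x (2 * k - x)) : ℝ) = x / (2 * k - x) * (2 * k - x).choose (k - x) := by
  have h := card_emptyingPaths x (k - x)
  rw [show 2 * (k - x) + x = 2 * k - x by omega] at h
  have hpos : (0 : ℝ) < 2 * k - x := by
    have : (x : ℝ) ≤ k := by exact_mod_cast hk
    linarith [show (1 : ℝ) ≤ x by exact_mod_cast hx]
  have hcast : ((2 * k - x : ℕ) : ℝ) = 2 * k - x := by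
    push_cast [Nat.cast_sub (by omega : x ≤ 2 * k)]
    ring
  rw [div_mul_eq_mul_div, eq_div_iff hpos.ne', mul_comm, ← hcast]
  exact_mod_cast h

lemma count_of_mem_emptyingPaths {x n : ℕ} {l : List ℤ} (h : l ∈ emptyingPaths x n) :
    l.count (-1) = l.count 1 + x ∧ l.count 1 + l.count (-1) = n := by
  induction n generalizing x l with
  | zero => cases x <;> simp_all [emptyingPaths]
  | succ n ih =>
    rcases x with _ | y
    · simp [emptyingPaths] at h
    simp only [emptyingPaths, mem_union, mem_image] at h
    rcases h with ⟨t, ht, rfl⟩ | ⟨t, ht, rfl⟩ <;> have := ih ht <;> simp <;> omega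

section

variable {Ω : Type*} (ξ : ℕ → Ω → ℤ)

def steps (n : ℕ) (ω : Ω) : List ℤ := (List.range n).map fun j => ξ (j + 1) ω

def EmptiesFirstAt (x n : ℕ) (ω : Ω) : Prop := ∀ m ≤ n, bufferWalk ξ x m ω = 0 ↔ m = n

variable {ξ}

@[simp]
lemma length_steps (n : ℕ) (ω : Ω) : (steps ξ n ω).length = n := by simp [steps]

lemma take_steps {m n : ℕ} (hmn : m ≤ n) (ω : Ω) : (steps ξ n ω).take m = steps ξ m ω := by
  simp [steps, ← List.map_take, List.take_range, Nat.min_eq_left hmn]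

lemma bufferWalk_eq_add_sum_steps (x n : ℕ) (ω : Ω) :
    bufferWalk ξ x n ω = x + (steps ξ n ω).sum := by
  induction n with
  | zero => simp [bufferWalk, steps]
  | succ n ih =>
    rw [bufferWalk, sum_Icc_succ_top (by omega), ← add_assoc, ← bufferWalk, ih]
    simp [steps, List.range_succ, add_assoc]

lemma departures_succ (n : ℕ) (ω : Ω) :
    departures ξ (n + 1) ω = departures ξ n ω + if ξ (n + 1) ω = -1 then 1 else 0 := by
  simp only [departures, card_filter]
  exact sum_Icc_succ_top (by omega) _

lemma bufferWalk_eq_sub_departures (hval : ∀ i ω, ξ i ω = 1 ∨ ξ i ω = -1) (x n : ℕ) (ω : Ω) :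
    bufferWalk ξ x n ω = x + n - 2 * departures ξ n ω := by
  induction n with
  | zero => simp [bufferWalk, departures]
  | succ n ih =>
    rw [bufferWalk_eq_add_sum_steps] at ih ⊢
    simp only [steps, List.range_succ, List.map_append, List.sum_append] at ih ⊢
    rw [departures_succ]
    rcases hval (n + 1) ω with h | h <;> simp [h] <;> omega

lemma departures_le (n : ℕ) (ω : Ω) : departures ξ n ω ≤ n :=
  (card_filter_le _ _).trans (by simp)

lemma departures_mono (ω : Ω) : Monotone (departures ξ · ω) := fun _ _ hmn =>
  card_le_card (filter_subset_filter _ (Icc_subset_Icc le_rfl hmn))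

lemma EmptiesFirstAt.unique {x n n' : ℕ} {ω : Ω} (h : EmptiesFirstAt ξ x n ω)
    (h' : EmptiesFirstAt ξ x n' ω) : n = n' := by
  rcases le_total n n' with hle | hle
  · exact (h' n hle).mp ((h n le_rfl).mpr rfl)
  · exact ((h n' hle).mp ((h' n' le_rfl).mpr rfl)).symm

lemma emptiesFirstAt_iff_steps_mem (hval : ∀ i ω, ξ i ω = 1 ∨ ξ i ω = -1) {x n : ℕ} {ω : Ω} :
    EmptiesFirstAt ξ x n ω ↔ steps ξ n ω ∈ emptyingPaths x n := by
  rw [mem_emptyingPaths_iff]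
  refine ⟨fun h => ⟨length_steps n ω, ?_, fun m hm => ?_⟩, fun ⟨_, _, h⟩ m hm => ?_⟩
  · simp only [steps, List.mem_map, List.mem_range]
    rintro _ ⟨j, -, rfl⟩
    exact hval (j + 1) ω
  · rw [take_steps hm, ← bufferWalk_eq_add_sum_steps]
    exact h m hm
  · rw [bufferWalk_eq_add_sum_steps, ← take_steps hm]
    exact h m hm

lemma exists_emptiesFirstAt_iff (hval : ∀ i ω, ξ i ω = 1 ∨ ξ i ω = -1) (x d : ℕ) (ω : Ω) :
    (∃ n, bufferWalk ξ x n ω = 0 ∧ departures ξ n ω ≤ d) ↔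
      ∃ k ∈ Icc x d, EmptiesFirstAt ξ x (2 * k - x) ω := by
  constructor
  · rintro ⟨n, hn, hd⟩
    have hex : ∃ m, bufferWalk ξ x m ω = 0 := ⟨n, hn⟩
    obtain ⟨T, hT0, hTmin⟩ : ∃ T, bufferWalk ξ x T ω = 0 ∧ ∀ m, bufferWalk ξ x m ω = 0 → T ≤ m :=
      ⟨Nat.find hex, Nat.find_spec hex, fun m hm => Nat.find_min' hex hm⟩
    have hT := bufferWalk_eq_sub_departures hval x T ω
    have hTd := departures_le (ξ := ξ) T ω
    have hdT : departures ξ T ω ≤ d := (departures_mono ω (hTmin n hn)).trans hd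
    refine ⟨departures ξ T ω, mem_Icc.mpr ⟨by omega, hdT⟩, fun m hm => ?_⟩
    rw [show 2 * departures ξ T ω - x = T by omega] at hm ⊢
    exact ⟨fun hm0 => le_antisymm hm (hTmin m hm0), fun h => h ▸ hT0⟩
  · rintro ⟨k, hk, h⟩
    have hk := mem_Icc.mp hk
    have h0 := (h _ le_rfl).mpr rfl
    have := bufferWalk_eq_sub_departures hval x (2 * k - x) ω
    exact ⟨2 * k - x, h0, by omega⟩

lemma preimage_steps_singleton {n : ℕ} {l : List ℤ} (hl : l.length = n) :
    steps ξ n ⁻¹' {l} = ⋂ j ∈ range n, ξ (j + 1) ⁻¹' {l.getD j 0} := by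
  ext ω
  simp only [Set.mem_preimage, Set.mem_singleton_iff, Set.mem_iInter, mem_range]
  constructor
  · rintro rfl j hj
    simp [steps, hj]
  · intro h
    refine List.ext_getElem (by simp [hl]) fun j hj _ => ?_
    simp only [length_steps] at hj
    simp [steps, h j hj, hl, hj]

lemma setOf_emptiesFirstAt_eq_biUnion (hval : ∀ i ω, ξ i ω = 1 ∨ ξ i ω = -1) (x n : ℕ) :
    {ω | EmptiesFirstAt ξ x n ω} = ⋃ l ∈ emptyingPaths x n, steps ξ n ⁻¹' {l} := by
  ext ω
  simp [emptiesFirstAt_iff_steps_mem hval]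

variable [MeasurableSpace Ω]

lemma measurableSet_preimage_steps_singleton (hmeas : ∀ i, Measurable (ξ i)) {n : ℕ}
    {l : List ℤ} (hl : l.length = n) : MeasurableSet (steps ξ n ⁻¹' {l}) := by
  rw [preimage_steps_singleton hl]
  exact measurableSet_biInter _ fun j _ => hmeas (j + 1) (measurableSet_singleton _)

lemma measure_preimage_steps_singleton {P : Measure Ω} (hindep : iIndepFun ξ P) {a b : ENNReal}
    (ha : ∀ i, P {ω | ξ i ω = 1} = a) (hb : ∀ i, P {ω | ξ i ω = -1} = b) {l : List ℤ}
    (hl : ∀ s ∈ l, s = 1 ∨ s = -1) :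
    P (steps ξ l.length ⁻¹' {l}) = a ^ l.count 1 * b ^ l.count (-1) := by
  let w : ℤ → ENNReal := fun s => if s = 1 then a else b
  have hfactor : ∀ j ∈ range l.length, P (ξ (j + 1) ⁻¹' {l.getD j 0}) = w (l.getD j 0) := by
    intro j hj
    have hj := mem_range.mp hj
    rw [List.getD_eq_getElem _ _ hj]
    rcases hl _ (List.getElem_mem hj) with h | h <;> simp only [w, h, if_pos]
    exacts [ha (j + 1), hb (j + 1)]
  rw [preimage_steps_singleton rfl,
    (hindep.precomp Nat.succ_injective).measure_inter_preimage_eq_mul _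
      fun _ _ => measurableSet_singleton _, prod_congr rfl hfactor,
    prod_range_getD_eq_prod_map, prod_map_eq_pow_count_mul_pow_count w hl]
  simp [w]

lemma measurableSet_emptiesFirstAt (hmeas : ∀ i, Measurable (ξ i))
    (hval : ∀ i ω, ξ i ω = 1 ∨ ξ i ω = -1) (x n : ℕ) :
    MeasurableSet {ω | EmptiesFirstAt ξ x n ω} := by
  rw [setOf_emptiesFirstAt_eq_biUnion hval]
  exact measurableSet_biUnion _ fun l hl =>
    measurableSet_preimage_steps_singleton hmeas (mem_emptyingPaths_iff.mp hl).1

lemma measure_emptiesFirstAt {P : Measure Ω} (hmeas : ∀ i, Measurable (ξ i))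
    (hindep : iIndepFun ξ P) (hval : ∀ i ω, ξ i ω = 1 ∨ ξ i ω = -1) {a b : ENNReal}
    (ha : ∀ i, P {ω | ξ i ω = 1} = a) (hb : ∀ i, P {ω | ξ i ω = -1} = b) {x k : ℕ} (hk : x ≤ k) :
    P {ω | EmptiesFirstAt ξ x (2 * k - x) ω} =
      #(emptyingPaths x (2 * k - x)) * (a ^ (k - x) * b ^ k) := by
  have hpath : ∀ l ∈ emptyingPaths x (2 * k - x), P (steps ξ (2 * k - x) ⁻¹' {l}) =
      a ^ (k - x) * b ^ k := by
    intro l hl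
    obtain ⟨hlen, hpm, -⟩ := mem_emptyingPaths_iff.mp hl
    obtain ⟨hdown, hlength⟩ := count_of_mem_emptyingPaths hl
    rw [← hlen, measure_preimage_steps_singleton hindep ha hb hpm,
      show l.count 1 = k - x by omega, show l.count (-1) = k by omega]
  rw [setOf_emptiesFirstAt_eq_biUnion hval, measure_biUnion_finset (Set.pairwiseDisjoint_fiber _ _)
    fun l hl => measurableSet_preimage_steps_singleton hmeas (mem_emptyingPaths_iff.mp hl).1,
    sum_congr rfl hpath, sum_const, nsmul_eq_mul]

end

theorem emptying_before_offset_probability_general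
    {Ω : Type*} [MeasurableSpace Ω] (P : Measure Ω)
    (p q : ℝ) (hp0 : 0 < p) (hp1 : p < 1) (hq : q = 1 - p)
    (ξ : ℕ → Ω → ℤ)
    (hmeas : ∀ i, Measurable (ξ i))
    (hindep : iIndepFun ξ P)
    (hval : ∀ i ω, ξ i ω = 1 ∨ ξ i ω = -1)
    (harr : ∀ i, P {ω | ξ i ω = 1} = ENNReal.ofReal p)
    (hdep : ∀ i, P {ω | ξ i ω = -1} = ENNReal.ofReal q)
    (x φ : ℕ) (hx : 1 ≤ x) :
    P {ω | ∃ n, bufferWalk ξ x n ω = 0 ∧ departures ξ n ω ≤ φ - 2} =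
      ENNReal.ofReal (∑ k ∈ Finset.Icc x (φ - 2),
        ((x : ℝ) / (2 * k - x)) * (Nat.choose (2 * k - x) (k - x)) *
          p ^ (k - x) * q ^ k) := by
  have hq0 : 0 ≤ q := by linarith
  have hdisj : (Icc x (φ - 2) : Set ℕ).PairwiseDisjoint
      fun k => {ω | EmptiesFirstAt ξ x (2 * k - x) ω} := by
    intro k hk k' hk' hne
    simp only [coe_Icc, Set.mem_Icc] at hk hk'
    exact Set.disjoint_left.mpr fun ω h h' => hne (by have := h.unique h'; omega)
  calc P {ω | ∃ n, bufferWalk ξ x n ω = 0 ∧ departures ξ n ω ≤ φ - 2}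
      = P (⋃ k ∈ Icc x (φ - 2), {ω | EmptiesFirstAt ξ x (2 * k - x) ω}) := by
        congr 1; ext ω; simpa using exists_emptiesFirstAt_iff hval x (φ - 2) ω
    _ = ∑ k ∈ Icc x (φ - 2), P {ω | EmptiesFirstAt ξ x (2 * k - x) ω} :=
        measure_biUnion_finset hdisj fun k _ => measurableSet_emptiesFirstAt hmeas hval _ _
    _ = ∑ k ∈ Icc x (φ - 2),
          ENNReal.ofReal (#(emptyingPaths x (2 * k - x)) * p ^ (k - x) * q ^ k) :=
        sum_congr rfl fun k hk => by
          rw [measure_emptiesFirstAt hmeas hindep hval harr hdep (mem_Icc.mp hk).1,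
            ENNReal.ofReal_mul (by positivity), ENNReal.ofReal_mul (by positivity),
            ENNReal.ofReal_natCast, ENNReal.ofReal_pow hp0.le, ENNReal.ofReal_pow hq0, mul_assoc]
    _ = _ := by
        rw [← ENNReal.ofReal_sum_of_nonneg fun _ _ => by positivity]
        exact congrArg _ (sum_congr rfl fun k hk => by
          rw [card_emptyingPaths_eq_ballot hx (mem_Icc.mp hk).1])

/-- For `x ≥ 1` and `φ > x`, the probability that the buffer walk started at `x`
empties within the first `φ − 2` departures equals
`P_s1 = ∑_{k=x}^{φ−2} (x/(2k−x)) · C(2k−x, k−x) · p^{k−x} · q^k`. -/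
theorem emptying_before_offset_probability
    {Ω : Type*} [MeasurableSpace Ω] (P : Measure Ω) [IsProbabilityMeasure P]
    (p q : ℝ) (hp0 : 0 < p) (hp1 : p < 1) (hq : q = 1 - p)
    (ξ : ℕ → Ω → ℤ)
    (hmeas : ∀ i, Measurable (ξ i))
    (hindep : iIndepFun ξ P)
    (hval : ∀ i ω, ξ i ω = 1 ∨ ξ i ω = -1)
    (harr : ∀ i, P {ω | ξ i ω = 1} = ENNReal.ofReal p)
    (hdep : ∀ i, P {ω | ξ i ω = -1} = ENNReal.ofReal q)
    (x φ : ℕ) (hx : 1 ≤ x) (hφ : x < φ) :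
    P {ω | ∃ n, bufferWalk ξ x n ω = 0 ∧ departures ξ n ω ≤ φ - 2} =
      ENNReal.ofReal (∑ k ∈ Finset.Icc x (φ - 2),
        ((x : ℝ) / (2 * k - x)) * (Nat.choose (2 * k - x) (k - x)) *
          p ^ (k - x) * q ^ k) :=
  emptying_before_offset_probability_general P p q hp0 hp1 hq ξ hmeas hindep hval harr hdep x φ hx
end

section
/- Let ρ ∈ (0,1) and let φ ≥ 1, x ≥ 0 be integers. Define q_j = (1 − ρ^{j+φ})/(φ+x) for −φ+1 ≤ j ≤ x and q_j = ((1 − ρ^{x+φ})/(φ+x)) · ρ^{j−x} for j ≥ x+1. Then the total mass is one: ∑_{j=−φ+1}^{x} q_j + ∑_{j=x+1}^{∞} q_j = 1; in particular q_{−φ+1} = (1−ρ)/(φ+x) is the correct normalizing value for the stationary distribution. -/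
/-- The (candidate) stationary distribution of the quality-switching Markov chain
of the BSC system: `q_j = (1 − ρ^{j+φ})/(φ+x)` for `j ≤ x` and
`q_j = ((1 − ρ^{x+φ})/(φ+x)) · ρ^{j−x}` for `j ≥ x+1`. -/
noncomputable def switchDist (ρ : ℝ) (φ x : ℕ) (j : ℤ) : ℝ :=
  if j ≤ (x : ℤ) then (1 - ρ ^ (j + (φ : ℤ))) / ((φ : ℝ) + (x : ℝ))
  else ((1 - ρ ^ ((x : ℤ) + (φ : ℤ))) / ((φ : ℝ) + (x : ℝ))) * ρ ^ (j - (x : ℤ))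

/-- For `ρ ∈ (0,1)`, φ ≥ 1 and x ≥ 0 the distribution
`q_j = (1 − ρ^{j+φ})/(φ+x)` (for `−φ+1 ≤ j ≤ x`),
`q_j = ((1 − ρ^{x+φ})/(φ+x)) · ρ^{j−x}` (for `j ≥ x+1`) has total mass one:
`∑_{j=−φ+1}^{x} q_j + ∑_{j=x+1}^{∞} q_j = 1`; in particular
`q_{−φ+1} = (1−ρ)/(φ+x)` is the correct normalizing value. -/
theorem switching_chain_total_mass_one
    (ρ : ℝ) (hρ0 : 0 < ρ) (hρ1 : ρ < 1)
    (φ x : ℕ) (hφ : 1 ≤ φ) :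
    ((∑ j ∈ Finset.Icc (-(φ : ℤ) + 1) (x : ℤ), switchDist ρ φ x j) +
        ∑' n : ℕ, switchDist ρ φ x ((x : ℤ) + 1 + n) = 1) ∧
    switchDist ρ φ x (-(φ : ℤ) + 1) = (1 - ρ) / ((φ : ℝ) + (x : ℝ)) := by
  have hρne : ρ ≠ 0 := ne_of_gt hρ0
  have hden : (φ : ℝ) + (x : ℝ) ≠ 0 := by positivity
  have h1ρ : (1 : ℝ) - ρ ≠ 0 := by linarith
  constructor
  · -- finite sum reindexed over range (φ + x)
    have hfin : (∑ j ∈ Finset.Icc (-(φ : ℤ) + 1) (x : ℤ), switchDist ρ φ x j) =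
        ∑ k ∈ Finset.range (φ + x), (1 - ρ ^ (k + 1)) / ((φ : ℝ) + (x : ℝ)) := by
      refine Finset.sum_bij' (fun j _ => (j + (φ : ℤ) - 1).toNat)
        (fun k _ => (k : ℤ) - (φ : ℤ) + 1) ?_ ?_ ?_ ?_ ?_
      · intro j hj
        simp only [Finset.mem_Icc] at hj
        simp only [Finset.mem_range]
        omega
      · intro k hk
        simp only [Finset.mem_range] at hk
        simp only [Finset.mem_Icc]
        omega
      · intro j hj
        simp only [Finset.mem_Icc] at hj
        omega
      · intro k hk
        omega
      · intro j hj
        simp only [Finset.mem_Icc] at hj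
        have hjx : j ≤ (x : ℤ) := hj.2
        rw [switchDist, if_pos hjx, ← zpow_natCast ρ ((j + (φ : ℤ) - 1).toNat + 1)]
        congr 2
        congr 1
        omega
    rw [hfin]
    -- tsum
    have htsum : (∑' n : ℕ, switchDist ρ φ x ((x : ℤ) + 1 + n)) =
        ((1 - ρ ^ ((x : ℤ) + (φ : ℤ))) / ((φ : ℝ) + (x : ℝ))) * (ρ * (1 - ρ)⁻¹) := by
      have h1 : ∀ n : ℕ, switchDist ρ φ x ((x : ℤ) + 1 + n) =
          ((1 - ρ ^ ((x : ℤ) + (φ : ℤ))) / ((φ : ℝ) + (x : ℝ))) * ρ * ρ ^ n := by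
        intro n
        have hnx : ¬ ((x : ℤ) + 1 + n ≤ (x : ℤ)) := by omega
        have h2 : (x : ℤ) + 1 + n - x = ((n + 1 : ℕ) : ℤ) := by omega
        rw [switchDist, if_neg hnx, h2, zpow_natCast, pow_succ]
        ring
      rw [tsum_congr h1, tsum_mul_left, tsum_geometric_of_lt_one hρ0.le hρ1]
      ring
    rw [htsum]
    -- simplify the finite sum
    have hgeom : ∑ k ∈ Finset.range (φ + x), (1 - ρ ^ (k + 1)) / ((φ : ℝ) + (x : ℝ)) =
        (((φ : ℝ) + x) - ρ * (1 - ρ ^ (φ + x)) / (1 - ρ)) / ((φ : ℝ) + (x : ℝ)) := by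
      rw [← Finset.sum_div]
      congr 1
      have : ∑ k ∈ Finset.range (φ + x), (1 - ρ ^ (k + 1)) =
          (φ + x : ℕ) - ρ * ∑ k ∈ Finset.range (φ + x), ρ ^ k := by
        rw [Finset.sum_sub_distrib, Finset.mul_sum]
        simp [pow_succ, mul_comm]
      have hρ1' : ρ - 1 ≠ 0 := by linarith
      rw [this, geom_sum_eq (by linarith : ρ ≠ 1)]
      push_cast
      field_simp [h1ρ, hρ1']
      ring
    rw [hgeom]
    have hxφ : ρ ^ ((x : ℤ) + (φ : ℤ)) = ρ ^ (φ + x) := by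
      rw [← zpow_natCast ρ (φ + x)]
      congr 1
      push_cast
      ring
    rw [hxφ]
    field_simp
    ring
  · have hle : -(φ : ℤ) + 1 ≤ (x : ℤ) := by omega
    have h1 : -(φ : ℤ) + 1 + (φ : ℤ) = ((1 : ℕ) : ℤ) := by ring
    rw [switchDist, if_pos hle, h1, zpow_natCast, pow_one]
end
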